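/- Let H be a reduced, commutative, cancellative, atomic monoid. Then c_eq(H) = sup{μ_eq(a) : a ∈ H, A_a(∼_{H,eq}) ≠ ∅, and |R_{a,k}| > 1 for some k ∈ L(a)} = sup{k ∈ ℕ : there exists a ∈ H with A_a(∼_{H,eq}) ≠ ∅, k ∈ L(a), and |R_{a,k}| > 1}. -/

import Mathlib

namespace CMR

variable {α : Type*} [CancelCommMonoid α]

/-- The factorization monoid `Z(H)`: the free abelian monoid over the set of atoms of `H`,
modeled as multisets of atoms. -/
abbrev Fac (α : Type*) [CancelCommMonoid α] : Type _ := Multiset {u : α // Irreducible u}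

/-- The factorization homomorphism `π : Z(H) → H`. -/
def piF (z : Fac α) : α := (z.map Subtype.val).prod

/-- `Z a`: the set of factorizations of `a`. -/
def Z (a : α) : Set (Fac α) := {z | piF z = a}

/-- `L a`: the set of lengths of `a`. -/
def L (a : α) : Set ℕ := {n | ∃ z ∈ Z a, Multiset.card z = n}

/-- `Zk a k`: the factorizations of `a` of length `k`. -/
def Zk (a : α) (k : ℕ) : Set (Fac α) := {z ∈ Z a | Multiset.card z = k}

/-- `ZM a M`: the factorizations of `a` whose length lies in `M`. -/
def ZM (a : α) (M : Set ℕ) : Set (Fac α) := {z ∈ Z a | Multiset.card z ∈ M}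

/-- The distance between two factorizations:
`d(z,z') = max (|z / gcd(z,z')|, |z' / gcd(z,z')|)`. -/
noncomputable def d (z z' : Fac α) : ℕ :=
  letI := Classical.decEq {u : α // Irreducible u}
  max (Multiset.card (z - z')) (Multiset.card (z' - z))

/-- The distance between two sets of factorizations, the minimum of pairwise
distances (with the convention `sInf ∅ = 0`). -/
noncomputable def dS (X Y : Set (Fac α)) : ℕ :=
  sInf {n : ℕ | ∃ x ∈ X, ∃ y ∈ Y, d x y = n}

/-- `k` and `l` are adjacent lengths of `a` (with `k < l`):
`L(a) ∩ [k, l] = {k, l}`. -/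
def Adjacent (a : α) (k l : ℕ) : Prop :=
  k ∈ L a ∧ l ∈ L a ∧ k < l ∧ ∀ m ∈ L a, k ≤ m → m ≤ l → m = k ∨ m = l

/-- A chain of factorizations of `a` from `z` to `z'` whose consecutive members
satisfy the step predicate `P`. -/
def Chain (a : α) (P : Fac α → Fac α → Prop) (z z' : Fac α) : Prop :=
  ∃ (n : ℕ) (c : Fin (n + 1) → Fac α),
    c 0 = z ∧ c (Fin.last n) = z' ∧ (∀ i, c i ∈ Z a) ∧
    ∀ i : Fin n, P (c i.castSucc) (c i.succ)

/-- The catenary degree of an element: the smallest `N ∈ ℕ∞` such that any two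
factorizations of `a` are connected by an `N`-chain. -/
noncomputable def cat (a : α) : ℕ∞ :=
  sInf {N : ℕ∞ | ∀ z ∈ Z a, ∀ z' ∈ Z a,
    Chain a (fun x y => (d x y : ℕ∞) ≤ N) z z'}

/-- The equal catenary degree of an element: the smallest `N ∈ ℕ∞` such that any two
factorizations of `a` of the same length are connected by an equal-length `N`-chain. -/
noncomputable def ceq (a : α) : ℕ∞ :=
  sInf {N : ℕ∞ | ∀ z ∈ Z a, ∀ z' ∈ Z a, Multiset.card z = Multiset.card z' →
    Chain a (fun x y => (d x y : ℕ∞) ≤ N ∧ Multiset.card x = Multiset.card y) z z'}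

/-- The monotone catenary degree of an element: the smallest `N ∈ ℕ∞` such that any two
factorizations of `a` (ordered by length) are connected by a monotone `N`-chain. -/
noncomputable def cmon (a : α) : ℕ∞ :=
  sInf {N : ℕ∞ | ∀ z ∈ Z a, ∀ z' ∈ Z a, Multiset.card z ≤ Multiset.card z' →
    Chain a (fun x y => (d x y : ℕ∞) ≤ N ∧ Multiset.card x ≤ Multiset.card y) z z'}

/-- The adjacent catenary degree of an element:
`c_adj(a) = sup{d(Z_k(a), Z_l(a)) : k, l ∈ L(a) adjacent}`. -/
noncomputable def cadj (a : α) : ℕ∞ :=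
  sSup {r : ℕ∞ | ∃ k l : ℕ, Adjacent a k l ∧ r = (dS (Zk a k) (Zk a l) : ℕ∞)}

noncomputable def catH (α : Type*) [CancelCommMonoid α] : ℕ∞ := ⨆ a : α, cat a
noncomputable def ceqH (α : Type*) [CancelCommMonoid α] : ℕ∞ := ⨆ a : α, ceq a
noncomputable def cmonH (α : Type*) [CancelCommMonoid α] : ℕ∞ := ⨆ a : α, cmon a
noncomputable def cadjH (α : Type*) [CancelCommMonoid α] : ℕ∞ := ⨆ a : α, cadj a

/-- `gcd(x, y) ≠ 1`: the two factorizations share an atom. -/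
def RStep (x y : Fac α) : Prop := ∃ u, u ∈ x ∧ u ∈ y

/-- `z ≈ z'`: there is an `R`-chain concatenating `z` and `z'` in `Z a`. -/
def RRel (a : α) (z z' : Fac α) : Prop := Chain a RStep z z'

/-- `z ≈_eq z'`: there is an equal-length `R`-chain concatenating `z` and `z'` in `Z a`. -/
def RRelEq (a : α) (z z' : Fac α) : Prop :=
  Chain a (fun x y => RStep x y ∧ Multiset.card x = Multiset.card y) z z'

/-- There is a monotone `R`-chain from `z` to `z'` in `Z a`. -/
def MonRChain (a : α) (z z' : Fac α) : Prop :=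
  Chain a (fun x y => RStep x y ∧ Multiset.card x ≤ Multiset.card y) z z'

/-- `μ(a)`: the supremum, over the `R`-classes `ρ` of `Z a`, of the minimal length of
an element of `ρ`. -/
noncomputable def mu (a : α) : ℕ∞ :=
  sSup {r : ℕ∞ | ∃ z ∈ Z a,
    r = ((sInf {n : ℕ | ∃ z', RRel a z z' ∧ Multiset.card z' = n} : ℕ) : ℕ∞)}

noncomputable def muH (α : Type*) [CancelCommMonoid α] : ℕ∞ := ⨆ a : α, mu a

/-- `μ_eq(a) = sup{k ∈ L(a) : Z_k(a) has more than one ≈_eq-class}`. -/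
noncomputable def mueq (a : α) : ℕ∞ :=
  sSup {r : ℕ∞ | ∃ k ∈ L a,
    (∃ z ∈ Zk a k, ∃ z' ∈ Zk a k, ¬ RRelEq a z z') ∧ r = (k : ℕ∞)}

noncomputable def mueqH (α : Type*) [CancelCommMonoid α] : ℕ∞ := ⨆ a : α, mueq a

/-- `μ_adj(a) = sup{k ∈ L(a) : d(Z_k(a), Z_l(a)) = k for the l ∈ L(a), l < k adjacent to k}`. -/
noncomputable def muadj (a : α) : ℕ∞ :=
  sSup {r : ℕ∞ | ∃ k ∈ L a,
    (∃ l : ℕ, Adjacent a l k ∧ dS (Zk a k) (Zk a l) = k) ∧ r = (k : ℕ∞)}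

noncomputable def muadjH (α : Type*) [CancelCommMonoid α] : ℕ∞ := ⨆ a : α, muadj a

/-- The monoid of relations of `H`, as a subset of `Z(H) × Z(H)`. -/
def relMon (α : Type*) [CancelCommMonoid α] : Set (Fac α × Fac α) :=
  {p | piF p.1 = piF p.2}

/-- The monoid of equal-length relations of `H`. -/
def relMonEq (α : Type*) [CancelCommMonoid α] : Set (Fac α × Fac α) :=
  {p | piF p.1 = piF p.2 ∧ Multiset.card p.1 = Multiset.card p.2}

/-- The monoid of monotone relations of `H`. -/
def relMonMon (α : Type*) [CancelCommMonoid α] : Set (Fac α × Fac α) :=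
  {p | piF p.1 = piF p.2 ∧ Multiset.card p.1 ≤ Multiset.card p.2}

/-- `p` is an atom (irreducible element) of the reduced submonoid `S` of `Z(H) × Z(H)`. -/
def IsAtomIn (S : Set (Fac α × Fac α)) (p : Fac α × Fac α) : Prop :=
  p ∈ S ∧ p ≠ 0 ∧ ∀ q ∈ S, ∀ r ∈ S, p = q + r → q = 0 ∨ r = 0

/-- `A_a(S) = A(S) ∩ (Z(a) × Z(a))`. -/
def AtomsAt (S : Set (Fac α × Fac α)) (a : α) : Set (Fac α × Fac α) :=
  {p | IsAtomIn S p ∧ p.1 ∈ Z a ∧ p.2 ∈ Z a}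

/-- The tame degree `t(a, x)`. -/
noncomputable def tdeg (a : α) (x : Fac α) : ℕ∞ :=
  sInf {N : ℕ∞ | ∀ z ∈ Z a, (∃ w ∈ Z a, x ≤ w) →
    ∃ z' ∈ Z a, x ≤ z' ∧ (d z z' : ℕ∞) ≤ N}

/-- The tame degree `t(H) = sup{t(a, u) : a ∈ H, u ∈ A(H)}`. -/
noncomputable def tH (α : Type*) [CancelCommMonoid α] : ℕ∞ :=
  ⨆ (a : α) (u : {u : α // Irreducible u}), tdeg a {u}

/-- The `m`-adjacent catenary degree of an element:
`c_{ad,m}(a) = sup{d(Z_k(a), Z_{[k-m,k)}(a)) : k ∈ L(a)}`. -/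
noncomputable def cadm (m : ℕ) (a : α) : ℕ∞ :=
  sSup {r : ℕ∞ | ∃ k ∈ L a, r = (dS (Zk a k) (ZM a (Set.Ico (k - m) k)) : ℕ∞)}

noncomputable def cadmH (α : Type*) [CancelCommMonoid α] (m : ℕ) : ℕ∞ := ⨆ a : α, cadm m a

/-- `μ_{ad,m}(a) = sup{k ∈ L(a) : d(Z_k(a), Z_{[k-m,k)}(a)) = k}`. -/
noncomputable def muadm (m : ℕ) (a : α) : ℕ∞ :=
  sSup {r : ℕ∞ | ∃ k ∈ L a, dS (Zk a k) (ZM a (Set.Ico (k - m) k)) = k ∧ r = (k : ℕ∞)}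

noncomputable def muadmH (α : Type*) [CancelCommMonoid α] (m : ℕ) : ℕ∞ := ⨆ a : α, muadm m a

/-- `H` is reduced: the only unit is `1`. -/
def Reduced (α : Type*) [CancelCommMonoid α] : Prop := ∀ a : α, IsUnit a → a = 1

/-- `H` is atomic: every element is a product of atoms. -/
def Atomic (α : Type*) [CancelCommMonoid α] : Prop := ∀ a : α, ∃ z : Fac α, piF z = a

/-- The ascending chain condition on principal ideals. -/
def ACCP (α : Type*) [CancelCommMonoid α] : Prop :=
  ∀ f : ℕ → α, (∀ n, f (n + 1) ∣ f n) → ∃ N, ∀ n, N ≤ n → f N ∣ f n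

/-! Two factorizations of the same length `k` without a common atom are at distance `k`, so an
equal-length chain whose steps are shorter than `k` is an `R`-chain: a pair of `≈_eq`-inequivalent
factorizations of length `k` forces `k ≤ c_eq(a)`, and it is an atom of `∼_{H,eq}` because a
splitting `(z, z') = (q₁, q₂) + (r₁, r₂)` yields the equal-length `R`-chain `z, q₁ + r₂, z'`.
Conversely, two factorizations of length `k` are joined by an equal-length chain of steps bounded
by the lengths of inequivalent pairs: inequivalent ones in a single step, equivalent ones by
cancelling the common atom of each `R`-step and inducting on `k`. -/

section Development

variable {α : Type*} [CancelCommMonoid α] {a b : α} {k : ℕ} {N : ℕ∞} {x y z z' : Fac α}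

lemma piF_cons (u : {u : α // Irreducible u}) (z : Fac α) : piF (u ::ₘ z) = u.1 * piF z := by
  simp [piF]

lemma piF_add (x y : Fac α) : piF (x + y) = piF x * piF y := by
  simp [piF]

lemma d_eq [DecidableEq {u : α // Irreducible u}] (z z' : Fac α) :
    d z z' = max (Multiset.card (z - z')) (Multiset.card (z' - z)) := by
  unfold d
  congr <;> exact Subsingleton.elim _ _

lemma d_le_of_card_eq (hz : Multiset.card z = k) (hz' : Multiset.card z' = k) : d z z' ≤ k := by
  classical
  rw [d_eq]
  exact max_le ((Multiset.card_le_card (Multiset.sub_le_self _ _)).trans hz.le)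
    ((Multiset.card_le_card (Multiset.sub_le_self _ _)).trans hz'.le)

lemma d_cons (u : {u : α // Irreducible u}) (x y : Fac α) : d (u ::ₘ x) (u ::ₘ y) = d x y := by
  simp only [d, ← Multiset.singleton_add, add_tsub_add_eq_tsub_left]

lemma rStep_of_d_lt (hz : Multiset.card z = k) (hz' : Multiset.card z' = k) (h : d z z' < k) :
    RStep z z' := by
  classical
  by_contra hdisj
  have hsub : ∀ s t : Fac α, (∀ u, ¬ (u ∈ s ∧ u ∈ t)) → s - t = s := fun s t hst => by
    rw [← Multiset.sub_inter, Multiset.inter_eq_zero_iff_disjoint.2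
      (Multiset.disjoint_left.2 fun hs ht => hst _ ⟨hs, ht⟩), tsub_zero]
  have : d z z' = k := by
    rw [d_eq, hsub z z' fun u hu => hdisj ⟨u, hu⟩, hsub z' z fun u hu => hdisj ⟨u, hu.2, hu.1⟩,
      hz, hz', max_self]
  exact h.ne this

lemma chain_iff_reflTransGen {P : Fac α → Fac α → Prop} :
    Chain a P z z' ↔ z ∈ Z a ∧ z' ∈ Z a ∧
      Relation.ReflTransGen (fun x y => P x y ∧ x ∈ Z a ∧ y ∈ Z a) z z' := by
  constructor
  · rintro ⟨n, c, rfl, rfl, hc, hstep⟩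
    exact ⟨hc 0, hc _, Fin.induction (motive := fun i => Relation.ReflTransGen _ (c 0) (c i)) .refl
      (fun i ih => ih.tail ⟨hstep i, hc _, hc _⟩) _⟩
  · rintro ⟨hz, -, h⟩
    induction h with
    | refl => exact ⟨0, fun _ => z, rfl, rfl, fun _ => hz, fun i => i.elim0⟩
    | @tail y y' _ hyy' ih =>
      obtain ⟨n, c, h0, hl, hc, hstep⟩ := ih
      refine ⟨n + 1, Fin.snoc c y', ?_, by simp, Fin.lastCases ?_ ?_, Fin.lastCases ?_ ?_⟩
      · rw [← Fin.castSucc_zero, Fin.snoc_castSucc, h0]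
      · simpa using hyy'.2.2
      · simpa using hc
      · simpa [hl] using hyy'.1
      · intro i
        rw [Fin.succ_castSucc, Fin.snoc_castSucc, Fin.snoc_castSucc]
        exact hstep i

namespace Chain

variable {P : Fac α → Fac α → Prop}

lemma refl (hz : z ∈ Z a) : Chain a P z z :=
  chain_iff_reflTransGen.2 ⟨hz, hz, .refl⟩

lemma single (hx : x ∈ Z a) (hy : y ∈ Z a) (h : P x y) : Chain a P x y :=
  chain_iff_reflTransGen.2 ⟨hx, hy, .single ⟨h, hx, hy⟩⟩

lemma trans (hxy : Chain a P x y) (hyz : Chain a P y z) : Chain a P x z := by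
  obtain ⟨hx, -, hxy⟩ := chain_iff_reflTransGen.1 hxy
  obtain ⟨-, hz, hyz⟩ := chain_iff_reflTransGen.1 hyz
  exact chain_iff_reflTransGen.2 ⟨hx, hz, hxy.trans hyz⟩

lemma cons (u : {u : α // Irreducible u}) (hP : ∀ p q, P p q → P (u ::ₘ p) (u ::ₘ q))
    (h : Chain b P x y) : Chain (u.1 * b) P (u ::ₘ x) (u ::ₘ y) := by
  obtain ⟨n, c, rfl, rfl, hc, hstep⟩ := h
  exact ⟨n, fun i => u ::ₘ c i, rfl, rfl, fun i => show piF _ = _ by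
    rw [piF_cons, show piF (c i) = b from hc i], fun i => hP _ _ (hstep i)⟩

end Chain

lemma pos_of_not_rRelEq (hz : z ∈ Zk a k) (hz' : z' ∈ Zk a k) (h : ¬ RRelEq a z z') : 0 < k := by
  refine Nat.pos_of_ne_zero fun hk => h ?_
  obtain rfl : z = z' := by
    rw [Multiset.card_eq_zero.1 (hz.2.trans hk), Multiset.card_eq_zero.1 (hz'.2.trans hk)]
  exact Chain.refl hz.1

lemma rRelEq_of_chain_of_lt (hN : N < k) (hz : z ∈ Zk a k)
    (h : Chain a (fun x y => (d x y : ℕ∞) ≤ N ∧ Multiset.card x = Multiset.card y) z z') :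
    RRelEq a z z' := by
  replace h := (chain_iff_reflTransGen.1 h).2.2
  suffices Multiset.card z' = k ∧ RRelEq a z z' from this.2
  induction h with
  | refl => exact ⟨hz.2, Chain.refl hz.1⟩
  | tail _ hyy' ih =>
    obtain ⟨⟨hd, hcard⟩, hy, hy'⟩ := hyy'
    have hshare := rStep_of_d_lt ih.1 (hcard ▸ ih.1) (by exact_mod_cast hd.trans_lt hN)
    exact ⟨hcard ▸ ih.1, ih.2.trans (Chain.single hy hy' ⟨hshare, hcard⟩)⟩

lemma le_ceq_of_not_rRelEq (hz : z ∈ Zk a k) (hz' : z' ∈ Zk a k) (h : ¬ RRelEq a z z') :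
    (k : ℕ∞) ≤ ceq a :=
  le_sInf fun _ hN => not_lt.1 fun hlt =>
    h (rRelEq_of_chain_of_lt hlt hz (hN z hz.1 z' hz'.1 (hz.2.trans hz'.2.symm)))

lemma le_mueq_of_not_rRelEq (hz : z ∈ Zk a k) (hz' : z' ∈ Zk a k) (h : ¬ RRelEq a z z') :
    (k : ℕ∞) ≤ mueq a :=
  le_sSup ⟨k, ⟨z, hz.1, hz.2⟩, ⟨z, hz, z', hz', h⟩, rfl⟩

lemma mueq_le_ceq (a : α) : mueq a ≤ ceq a :=
  sSup_le fun _ ⟨_, _, ⟨_, hz, _, hz', h⟩, hr⟩ => hr ▸ le_ceq_of_not_rRelEq hz hz' h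

lemma isAtomIn_relMonEq_of_not_rRelEq (hz : z ∈ Zk a k) (hz' : z' ∈ Zk a k)
    (h : ¬ RRelEq a z z') : IsAtomIn (relMonEq α) (z, z') := by
  refine ⟨⟨hz.1.trans hz'.1.symm, hz.2.trans hz'.2.symm⟩, fun h0 => ?_, ?_⟩
  · obtain ⟨rfl, rfl⟩ := Prod.mk.inj h0
    exact h (Chain.refl hz.1)
  rintro ⟨q, q'⟩ ⟨hqπ, hq⟩ ⟨r, r'⟩ ⟨hrπ, hr⟩ hsplit
  obtain ⟨rfl, rfl⟩ := Prod.mk.inj hsplit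
  by_contra! hne
  obtain ⟨u, hu⟩ := Multiset.exists_mem_of_ne_zero fun h0 : q = 0 =>
    hne.1 (Prod.ext h0 (Multiset.card_eq_zero.1 (hq ▸ h0 ▸ Multiset.card_zero)))
  obtain ⟨v, hv⟩ := Multiset.exists_mem_of_ne_zero fun h0 : r' = 0 =>
    hne.2 (Prod.ext (Multiset.card_eq_zero.1 (hr.symm ▸ h0 ▸ Multiset.card_zero)) h0)
  have hmid : q + r' ∈ Z a := by
    change piF _ = a
    rw [piF_add, hqπ, ← piF_add]
    exact hz'.1
  exact h <| (Chain.single hz.1 hmid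
      ⟨⟨u, Multiset.mem_add.2 (.inl hu), Multiset.mem_add.2 (.inl hu)⟩, by simp [hr]⟩).trans
    (Chain.single hmid hz'.1
      ⟨⟨v, Multiset.mem_add.2 (.inr hv), Multiset.mem_add.2 (.inr hv)⟩, by simp [hq]⟩)

lemma atomsAt_relMonEq_nonempty_of_not_rRelEq (hz : z ∈ Zk a k) (hz' : z' ∈ Zk a k)
    (h : ¬ RRelEq a z z') : (AtomsAt (relMonEq α) a).Nonempty :=
  ⟨(z, z'), isAtomIn_relMonEq_of_not_rRelEq hz hz' h, hz.1, hz'.1⟩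

lemma chain_of_rStep
    (ih : ∀ (b : α) (x y : Fac α), x ∈ Zk b k → y ∈ Zk b k →
      Chain b (fun x y => (d x y : ℕ∞) ≤ N ∧ Multiset.card x = Multiset.card y) x y)
    (hx : x ∈ Zk a (k + 1)) (hy : y ∈ Zk a (k + 1)) (hxy : RStep x y) :
    Chain a (fun x y => (d x y : ℕ∞) ≤ N ∧ Multiset.card x = Multiset.card y) x y := by
  obtain ⟨u, hux, huy⟩ := hxy
  obtain ⟨x, rfl⟩ := Multiset.exists_cons_of_mem hux
  obtain ⟨y, rfl⟩ := Multiset.exists_cons_of_mem huy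
  have hπ : piF y = piF x := mul_left_cancel (by rw [← piF_cons, ← piF_cons, hx.1, hy.1])
  have hchain := (ih (piF x) x y ⟨rfl, by simpa using hx.2⟩ ⟨hπ, by simpa using hy.2⟩).cons u
    fun p q ⟨hd, hcard⟩ => ⟨by rwa [d_cons], by simp [hcard]⟩
  rwa [← piF_cons, hx.1] at hchain

lemma chain_of_forall_not_rRelEq
    (hN : ∀ (b : α) (k : ℕ) (z z' : Fac α), z ∈ Zk b k → z' ∈ Zk b k → ¬ RRelEq b z z' →
      (k : ℕ∞) ≤ N)
    (hz : z ∈ Zk a k) (hz' : z' ∈ Zk a k) :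
    Chain a (fun x y => (d x y : ℕ∞) ≤ N ∧ Multiset.card x = Multiset.card y) z z' := by
  induction k generalizing a z z' with
  | zero =>
    obtain rfl : z = z' := by
      rw [Multiset.card_eq_zero.1 hz.2, Multiset.card_eq_zero.1 hz'.2]
    exact Chain.refl hz.1
  | succ k ih =>
    by_cases hR : RRelEq a z z'
    · replace hR := (chain_iff_reflTransGen.1 hR).2.2
      induction hR with
      | refl => exact Chain.refl hz.1
      | tail _ hyy' ihR =>
        obtain ⟨⟨hshare, hcard⟩, hy, -⟩ := hyy'
        have hy : _ ∈ Zk a (k + 1) := ⟨hy, hcard.trans hz'.2⟩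
        exact (ihR hy).trans (chain_of_rStep (fun _ _ _ => ih) hy hz' hshare)
    · exact Chain.single hz.1 hz'.1 ⟨(Nat.cast_le.2 (d_le_of_card_eq hz.2 hz'.2)).trans
        (hN a _ z z' hz hz' hR), hz.2.trans hz'.2.symm⟩

lemma ceq_le_of_forall_not_rRelEq
    (hN : ∀ (b : α) (k : ℕ) (z z' : Fac α), z ∈ Zk b k → z' ∈ Zk b k → ¬ RRelEq b z z' →
      (k : ℕ∞) ≤ N)
    (a : α) : ceq a ≤ N :=
  sInf_le fun _ hz _ hz' hcard => chain_of_forall_not_rRelEq hN ⟨hz, rfl⟩ ⟨hz', hcard.symm⟩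

end Development

theorem stmt5_general {α : Type*} [CancelCommMonoid α] :
    ceqH α = sSup {r : ℕ∞ | ∃ a : α, (AtomsAt (relMonEq α) a).Nonempty ∧
        (∃ k ∈ L a, ∃ z ∈ Zk a k, ∃ z' ∈ Zk a k, ¬ RRelEq a z z') ∧ r = mueq a} ∧
    ceqH α = sSup {r : ℕ∞ | ∃ k : ℕ, 0 < k ∧
        (∃ a : α, (AtomsAt (relMonEq α) a).Nonempty ∧ k ∈ L a ∧
          ∃ z ∈ Zk a k, ∃ z' ∈ Zk a k, ¬ RRelEq a z z') ∧ r = (k : ℕ∞)} := by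
  have hlengths : ceqH α = sSup {r : ℕ∞ | ∃ k : ℕ, 0 < k ∧
      (∃ a : α, (AtomsAt (relMonEq α) a).Nonempty ∧ k ∈ L a ∧
        ∃ z ∈ Zk a k, ∃ z' ∈ Zk a k, ¬ RRelEq a z z') ∧ r = (k : ℕ∞)} := by
    refine le_antisymm (iSup_le <| ceq_le_of_forall_not_rRelEq fun b k z z' hz hz' h => ?_) ?_
    · exact le_sSup ⟨k, pos_of_not_rRelEq hz hz' h,
        ⟨b, atomsAt_relMonEq_nonempty_of_not_rRelEq hz hz' h, ⟨z, hz.1, hz.2⟩, z, hz, z', hz', h⟩,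
        rfl⟩
    · exact sSup_le fun _ ⟨_, _, ⟨b, _, _, _, hz, _, hz', h⟩, hr⟩ =>
        hr ▸ (le_ceq_of_not_rRelEq hz hz' h).trans (le_iSup ceq b)
  refine ⟨le_antisymm (hlengths.le.trans <| sSup_le ?_) (sSup_le ?_), hlengths⟩
  · rintro _ ⟨k, -, ⟨b, hA, hk, z, hz, z', hz', h⟩, rfl⟩
    exact (le_mueq_of_not_rRelEq hz hz' h).trans (le_sSup ⟨b, hA, ⟨k, hk, z, hz, z', hz', h⟩, rfl⟩)
  · rintro _ ⟨b, -, -, rfl⟩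
    exact (mueq_le_ceq b).trans (le_iSup ceq b)

/-- Let `H` be a reduced, commutative, cancellative, atomic monoid. Then
`c_eq(H) = sup{μ_eq(a) : a ∈ H, A_a(∼_{H,eq}) ≠ ∅, |R_{a,k}| > 1 for some k ∈ L(a)}`
`        = sup{k ∈ ℕ : ∃ a ∈ H with A_a(∼_{H,eq}) ≠ ∅, k ∈ L(a), |R_{a,k}| > 1}`. -/
theorem stmt5 {α : Type*} [CancelCommMonoid α]
    (hred : Reduced α) (hatomic : Atomic α) :
    ceqH α = sSup {r : ℕ∞ | ∃ a : α, (AtomsAt (relMonEq α) a).Nonempty ∧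
        (∃ k ∈ L a, ∃ z ∈ Zk a k, ∃ z' ∈ Zk a k, ¬ RRelEq a z z') ∧ r = mueq a} ∧
    ceqH α = sSup {r : ℕ∞ | ∃ k : ℕ, 0 < k ∧
        (∃ a : α, (AtomsAt (relMonEq α) a).Nonempty ∧ k ∈ L a ∧
          ∃ z ∈ Zk a k, ∃ z' ∈ Zk a k, ¬ RRelEq a z z') ∧ r = (k : ℕ∞)} :=
  stmt5_general

end CMR
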